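/- Fix c₁ > 0 and let α > 1 satisfy α ln α = c₁. With q = 1 - c₁/n, x₀ = (α-1)n/α, the derivative ψ'(x₀) of ψ(x) = ln φ(x) - ln φ(x₀) satisfies ψ'(x₀) = O(1/n); in particular the constant term (c₁/α) - ln α in the expansion of ψ'(x₀) vanishes. -/
import Mathlib


open Real

/-- The explicit formula for `ψ'(x)` where `ψ(x) = ln φ(x) - ln φ(x₀)`:
`ψ'(x) = (1/2)(1/(n-x) - 1/x) + ln((n-x)/x) - (2n-2x)·ln q + ln(1 - q^{n-x})
        + x·q^{n-x}·ln q/(1 - q^{n-x}) - ln r`,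
with `q = 1 - c₁/n` and `r = (1 - c₂/n)/q`. -/
noncomputable def psiDeriv (c₁ c₂ : ℝ) (n : ℕ) (x : ℝ) : ℝ :=
  (1 / 2) * (1 / ((n : ℝ) - x) - 1 / x) + Real.log (((n : ℝ) - x) / x) -
    (2 * (n : ℝ) - 2 * x) * Real.log (1 - c₁ / n) +
    Real.log (1 - (1 - c₁ / n) ^ ((n : ℝ) - x)) +
    x * (1 - c₁ / n) ^ ((n : ℝ) - x) * Real.log (1 - c₁ / n) /
      (1 - (1 - c₁ / n) ^ ((n : ℝ) - x)) -
    Real.log ((1 - c₂ / n) / (1 - c₁ / n))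

lemma log_one_sub_add_le {u : ℝ} (h0 : 0 ≤ u) (h1 : u ≤ 1/2) :
    |Real.log (1 - u) + u| ≤ 2 * u^2 := by
  have hpos : 0 < 1 - u := by linarith
  have hub : Real.log (1 - u) + u ≤ 0 := by
    have := Real.log_le_sub_one_of_pos hpos; linarith
  have hlb : -(2*u^2) ≤ Real.log (1 - u) + u := by
    have h2 : Real.exp (-(u + 2*u^2)) ≤ 1 - u := by
      have h3 : 1 + (u + 2*u^2) ≤ Real.exp (u + 2*u^2) := by
        have := Real.add_one_le_exp (u + 2*u^2); linarith
      have hepos : 0 < Real.exp (u+2*u^2) := Real.exp_pos _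
      rw [Real.exp_neg, inv_le_iff_one_le_mul₀ hepos]
      nlinarith [Real.exp_pos (u+2*u^2)]
    have := (Real.le_log_iff_exp_le hpos).mpr h2
    linarith
  rw [abs_le]; constructor <;> linarith

lemma abs_log_one_sub_le {u : ℝ} (h0 : 0 ≤ u) (h1 : u ≤ 1/2) :
    |Real.log (1 - u)| ≤ 2*u := by
  have h := abs_le.mp (log_one_sub_add_le h0 h1)
  rw [abs_le]; constructor <;> nlinarith [h.1, h.2]

lemma log_diff_bound {x y m : ℝ} (hm : 0 < m) (hx : m ≤ x) (hy : m ≤ y) :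
    |Real.log x - Real.log y| ≤ |x - y| / m := by
  have key : ∀ a b : ℝ, m ≤ a → m ≤ b → b ≤ a →
      Real.log a - Real.log b ≤ (a - b)/m := by
    intro a b ha hb hba
    have hb0 : 0 < b := lt_of_lt_of_le hm hb
    have ha0 : 0 < a := lt_of_lt_of_le hm ha
    have hlog : Real.log a - Real.log b = Real.log (a/b) :=
      (Real.log_div (ne_of_gt ha0) (ne_of_gt hb0)).symm
    rw [hlog]
    have h1 := Real.log_le_sub_one_of_pos (show 0 < a/b by positivity)
    have h2 : a/b - 1 = (a-b)/b := by field_simp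
    have h3 : (a-b)/b ≤ (a-b)/m := div_le_div_of_nonneg_left (by linarith) hm hb
    linarith
  rcases le_total y x with h | h
  · rw [abs_of_nonneg (by have := Real.log_le_log (lt_of_lt_of_le hm hy) h; linarith),
      abs_of_nonneg (by linarith)]
    exact key x y hx hy h
  · rw [abs_sub_comm, abs_sub_comm x y,
      abs_of_nonneg (by have := Real.log_le_log (lt_of_lt_of_le hm hx) h; linarith),
      abs_of_nonneg (by linarith)]
    exact key y x hy hx h

lemma abs_add5 (a b c d e : ℝ) : |a+b+c+d+e| ≤ |a|+|b|+|c|+|d|+|e| := by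
  calc |a+b+c+d+e| ≤ |a+b+c+d| + |e| := abs_add_le _ _
    _ ≤ |a+b+c| + |d| + |e| := by linarith [abs_add_le (a+b+c) d]
    _ ≤ |a+b| + |c| + |d| + |e| := by linarith [abs_add_le (a+b) c]
    _ ≤ |a| + |b| + |c| + |d| + |e| := by linarith [abs_add_le a b]

lemma assemble {x1 x2 x3 x4 x5 z b1 b2 b3 b4 b5 : ℝ}
    (h1 : |x1| ≤ b1) (h2 : |x2| ≤ b2) (h3 : |x3| ≤ b3) (h4 : |x4| ≤ b4)
    (h5 : |x5| ≤ b5) (hz : z = 0) :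
    |x1 + x2 + x3 + x4 + x5 + z| ≤ b1 + b2 + b3 + b4 + b5 := by
  rw [hz, add_zero]
  linarith [abs_add5 x1 x2 x3 x4 x5]

set_option maxHeartbeats 1000000 in
/-- `ψ'(x₀) = O(1/n)` at `x₀ = (α-1)n/α`; in particular the constant term
`c₁/α - ln α` in the expansion of `ψ'(x₀)` vanishes. -/
theorem psiDeriv_x0_bigO (c₁ c₂ α : ℝ) (hc₁ : 0 < c₁) (hc₂ : 0 ≤ c₂)
    (hα : 1 < α) (hαc : α * Real.log α = c₁) :
    (∃ C : ℝ, ∃ N : ℕ, ∀ n : ℕ, N ≤ n →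
      |psiDeriv c₁ c₂ n ((α - 1) * n / α)| ≤ C / n) ∧
    c₁ / α - Real.log α = 0 := by
  have hα0 : (0:ℝ) < α := by linarith
  have hα1 : (0:ℝ) < α - 1 := by linarith
  have hc₁α : c₁ / α = Real.log α := by
    rw [div_eq_iff (ne_of_gt hα0), mul_comm]; exact hαc.symm
  constructor
  · set β := 1 - 1/α with hβdef
    have hβeq : β = (α-1)/α := by rw [hβdef]; field_simp
    have hβpos : 0 < β := by rw [hβeq]; exact div_pos hα1 hα0
    set K₁ := 4*c₁^2/α^2 with hK₁
    set K₂ := 2*c₁^2*(α-1)/α with hK₂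
    set K₃ := 2*K₁/β^2 with hK₃
    clear_value β K₁ K₂ K₃
    have hK₁0 : 0 ≤ K₁ := by rw [hK₁]; positivity
    have hK₂0 : 0 ≤ K₂ := by
      rw [hK₂]; exact div_nonneg (by nlinarith) hα0.le
    have hK₃0 : 0 ≤ K₃ := by
      rw [hK₃]; exact div_nonneg (by linarith) (by positivity)
    refine ⟨(α + α/(α-1))/2 + 4*c₁^2/α + 2*K₁/β +
      (((α-1)*c₁/α + K₂)*K₃ + K₂/(α-1)) + 2*(c₁+c₂), ?_⟩
    have hev : ∀ᶠ n : ℕ in Filter.atTop,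
        |psiDeriv c₁ c₂ n ((α - 1) * n / α)| ≤
          ((α + α/(α-1))/2 + 4*c₁^2/α + 2*K₁/β +
            (((α-1)*c₁/α + K₂)*K₃ + K₂/(α-1)) + 2*(c₁+c₂)) / n := by
      filter_upwards [tendsto_natCast_atTop_atTop.eventually_ge_atTop
        (1 + 2*c₁ + 2*c₂ + 2*c₁^2/α + 2*K₁/β)] with n hn
      simp only [psiDeriv]
      set nn := (n:ℝ) with hnndef
      clear_value nn
      -- basic positivity facts
      have h03 : (0:ℝ) ≤ 2*c₁^2/α := div_nonneg (by positivity) hα0.le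
      have h04 : (0:ℝ) ≤ 2*K₁/β := div_nonneg (by linarith) hβpos.le
      have hM1 : (1:ℝ) ≤ nn := by linarith
      have h0 : (0:ℝ) < nn := by linarith
      have hp1 : (0:ℝ) < nn/α := div_pos h0 hα0
      have hp3 : (0:ℝ) < (α-1)*nn/α := div_pos (mul_pos hα1 h0) hα0
      have h2c₁ : 2*c₁ ≤ nn := by linarith
      have h2c₂ : 2*c₂ ≤ nn := by linarith
      have h2a : 2*c₁^2/α ≤ nn := by linarith
      have h2b : 2*K₁/β ≤ nn := by linarith
      have hu1 : c₁/nn ≤ 1/2 := by rw [div_le_iff₀ h0]; linarith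
      have hu2 : c₂/nn ≤ 1/2 := by rw [div_le_iff₀ h0]; linarith
      have hu1' : (0:ℝ) ≤ c₁/nn := div_nonneg hc₁.le h0.le
      have hu2' : (0:ℝ) ≤ c₂/nn := div_nonneg hc₂ h0.le
      have hq : (0:ℝ) < 1 - c₁/nn := by linarith
      have hq2 : (0:ℝ) < 1 - c₂/nn := by linarith
      have hδ : 2*c₁^2/(α*nn) ≤ 1 := by
        rw [div_le_one (mul_pos hα0 h0)]
        have h' := mul_le_mul_of_nonneg_left h2a hα0.le
        have h'' : α*(2*c₁^2/α) = 2*c₁^2 := by field_simp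
        linarith
      have h2K : 2*K₁ ≤ β*nn := by
        have h := mul_le_mul_of_nonneg_right h2b hβpos.le
        rw [div_mul_cancel₀ _ (ne_of_gt hβpos)] at h
        rw [mul_comm β nn]; exact h
      have hKβ : K₁/nn ≤ β/2 := by
        rw [div_le_div_iff₀ h0 two_pos]; linarith
      -- rewrite goal
      have hxeq : nn - (α-1)*nn/α = nn/α := by field_simp; ring
      rw [hxeq]
      rw [show (1:ℝ)/(nn/α) = α/nn from one_div_div _ _]
      rw [show (1:ℝ)/((α-1)*nn/α) = α/((α-1)*nn) from one_div_div _ _]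
      have hne : nn ≠ 0 := ne_of_gt h0
      have hαne : α ≠ 0 := ne_of_gt hα0
      have hα1ne : α - 1 ≠ 0 := ne_of_gt hα1
      have hTB : Real.log ((nn/α)/((α-1)*nn/α)) = -Real.log (α-1) := by
        rw [show (nn/α)/((α-1)*nn/α) = ((α-1))⁻¹ by field_simp]
        exact Real.log_inv _
      rw [hTB]
      rw [show 2*nn - 2*((α-1)*nn/α) = 2*(nn/α) by field_simp; ring]
      rw [Real.log_div (ne_of_gt hq2) (ne_of_gt hq)]
      set P := (1 - c₁/nn) ^ (nn/α) with hPset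
      set v := Real.log (1 - c₁/nn) * (nn/α) with hvdef
      clear_value P v
      have hPv : P = Real.exp v := by
        rw [hPset, hvdef]; exact Real.rpow_def_of_pos hq _
      have hPpos : 0 < P := by rw [hPv]; exact Real.exp_pos _
      have hL1 : |Real.log (1 - c₁/nn) + c₁/nn| ≤ 2*(c₁/nn)^2 :=
        log_one_sub_add_le hu1' hu1
      have hveq : v + c₁/α = (Real.log (1 - c₁/nn) + c₁/nn) * (nn/α) := by
        rw [hvdef]; field_simp
      have hv : |v + c₁/α| ≤ 2*c₁^2/(α*nn) := by
        rw [hveq, abs_mul, abs_of_pos hp1]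
        calc |Real.log (1 - c₁/nn) + c₁/nn| * (nn/α)
            ≤ (2*(c₁/nn)^2) * (nn/α) := mul_le_mul_of_nonneg_right hL1 hp1.le
          _ = 2*c₁^2/(α*nn) := by field_simp
      have hexp : Real.exp (-(c₁/α)) = 1/α := by
        rw [Real.exp_neg, hc₁α, Real.exp_log hα0, one_div]
      have hw1 : |v + c₁/α| ≤ 1 := le_trans hv hδ
      have he := Real.abs_exp_sub_one_le hw1
      have keyeq : P - 1/α = Real.exp (-(c₁/α)) * (Real.exp (v + c₁/α) - 1) := by
        rw [hPv, mul_sub, mul_one, ← Real.exp_add, hexp,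
          show -(c₁/α) + (v + c₁/α) = v by ring]
      have hPbound : |P - 1/α| ≤ K₁/nn := by
        rw [keyeq, abs_mul, abs_of_pos (Real.exp_pos _), hexp]
        calc (1/α) * |Real.exp (v+c₁/α) - 1|
            ≤ (1/α) * (2*(2*c₁^2/(α*nn))) := by
              have h' : |Real.exp (v+c₁/α) - 1| ≤ 2*(2*c₁^2/(α*nn)) :=
                le_trans he (by linarith)
              exact mul_le_mul_of_nonneg_left h' (le_of_lt (div_pos one_pos hα0))
          _ = K₁/nn := by rw [hK₁]; field_simp; ring
      have h1P : β/2 ≤ 1 - P := by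
        have h' := (abs_le.mp hPbound).2
        have hβ1 : (1:ℝ) - 1/α = β := hβdef.symm
        linarith
      have h1Ppos : (0:ℝ) < 1 - P := lt_of_lt_of_le (by linarith) h1P
      -- bound term 1
      have hb1 : |1/2 * (α/nn - α/((α-1)*nn))| ≤ ((α + α/(α-1))/2)/nn := by
        have ht1eq : 1/2*(α/nn - α/((α-1)*nn)) = (α - α/(α-1))/(2*nn) := by
          field_simp
        have hfr : 0 < α/(α-1) := div_pos hα0 hα1
        have h2nn : (0:ℝ) < 2*nn := by linarith
        rw [ht1eq, abs_div, abs_of_pos h2nn]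
        have habs : |α - α/(α-1)| ≤ α + α/(α-1) := by
          rw [abs_le]; constructor <;> linarith
        calc |α - α/(α-1)|/(2*nn) ≤ (α + α/(α-1))/(2*nn) :=
            (div_le_div_iff_of_pos_right h2nn).mpr habs
          _ = ((α + α/(α-1))/2)/nn := by ring
      -- bound term 3
      have hb3 : |2*(nn/α)*Real.log (1 - c₁/nn) + 2*c₁/α| ≤ (4*c₁^2/α)/nn := by
        rw [show 2*(nn/α)*Real.log (1 - c₁/nn) + 2*c₁/α
            = (Real.log (1 - c₁/nn) + c₁/nn)*(2*nn/α) by field_simp]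
        have hp4 : (0:ℝ) < 2*nn/α := div_pos (by linarith) hα0
        rw [abs_mul, abs_of_pos hp4]
        calc |Real.log (1 - c₁/nn) + c₁/nn| * (2*nn/α)
            ≤ (2*(c₁/nn)^2) * (2*nn/α) :=
              mul_le_mul_of_nonneg_right hL1 hp4.le
          _ = (4*c₁^2/α)/nn := by field_simp; ring
      -- bound term 4
      have hβhalf : (0:ℝ) < β/2 := by linarith
      have hb4 : |Real.log (1-P) - Real.log β| ≤ (2*K₁/β)/nn := by
        have hlogd := log_diff_bound hβhalf h1P (by linarith : β/2 ≤ β)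
        refine le_trans hlogd ?_
        rw [show (1-P) - β = -(P - 1/α) by rw [hβdef]; ring, abs_neg]
        calc |P - 1/α|/(β/2) ≤ (K₁/nn)/(β/2) :=
            (div_le_div_iff_of_pos_right hβhalf).mpr hPbound
          _ = (2*K₁/β)/nn := by field_simp
      -- bound term 5
      have hW : |(α-1)*nn/α*Real.log (1 - c₁/nn) + (α-1)*c₁/α| ≤ K₂/nn := by
        rw [show (α-1)*nn/α*Real.log (1 - c₁/nn) + (α-1)*c₁/α
            = (Real.log (1 - c₁/nn) + c₁/nn)*((α-1)*nn/α) by field_simp]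
        rw [abs_mul, abs_of_pos hp3]
        calc |Real.log (1 - c₁/nn) + c₁/nn| * ((α-1)*nn/α)
            ≤ (2*(c₁/nn)^2) * ((α-1)*nn/α) :=
              mul_le_mul_of_nonneg_right hL1 hp3.le
          _ = K₂/nn := by rw [hK₂]; field_simp
      have hdpos : (0:ℝ) ≤ (α-1)*c₁/α := le_of_lt (div_pos (mul_pos hα1 hc₁) hα0)
      have hK2nn : K₂/nn ≤ K₂ := by
        calc K₂/nn ≤ K₂/1 := div_le_div_of_nonneg_left hK₂0 one_pos hM1
          _ = K₂ := div_one _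
      have hWb : |(α-1)*nn/α*Real.log (1 - c₁/nn)| ≤ (α-1)*c₁/α + K₂ := by
        have h1 := abs_le.mp hW
        rw [abs_le]; constructor <;> [linarith [h1.1]; linarith [h1.2]]
      have h1Pne : 1 - P ≠ 0 := ne_of_gt h1Ppos
      have hfrac : P/(1-P) - 1/(α-1) = (P - 1/α)/((1-P)*β) := by
        rw [hβdef]; field_simp; ring
      have hdenpos : (0:ℝ) < (1-P)*β := mul_pos h1Ppos hβpos
      have hR : |P/(1-P) - 1/(α-1)| ≤ K₃/nn := by
        rw [hfrac, abs_div, abs_of_pos hdenpos]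
        have hden2 : β/2*β ≤ (1-P)*β := mul_le_mul_of_nonneg_right h1P hβpos.le
        calc |P - 1/α|/((1-P)*β) ≤ (K₁/nn)/((1-P)*β) :=
            (div_le_div_iff_of_pos_right hdenpos).mpr hPbound
          _ ≤ (K₁/nn)/(β/2*β) :=
            div_le_div_of_nonneg_left (div_nonneg hK₁0 h0.le)
              (mul_pos hβhalf hβpos) hden2
          _ = K₃/nn := by rw [hK₃]; field_simp
      have hb5 : |(α-1)*nn/α * P * Real.log (1 - c₁/nn) / (1-P) + c₁/α|
          ≤ (((α-1)*c₁/α + K₂)*K₃ + K₂/(α-1))/nn := by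
        rw [show (α-1)*nn/α * P * Real.log (1 - c₁/nn) / (1-P) + c₁/α
            = ((α-1)*nn/α*Real.log (1 - c₁/nn)) * (P/(1-P) - 1/(α-1))
              + ((α-1)*nn/α*Real.log (1 - c₁/nn) + (α-1)*c₁/α) * (1/(α-1)) by
            field_simp; ring]
        refine le_trans (abs_add_le _ _) ?_
        refine le_trans (add_le_add (le_of_eq (abs_mul _ _)) (le_of_eq (abs_mul _ _))) ?_
        rw [abs_of_pos (div_pos one_pos hα1)]
        have m1 : |(α-1)*nn/α*Real.log (1 - c₁/nn)| * |P/(1-P) - 1/(α-1)|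
            ≤ ((α-1)*c₁/α + K₂) * (K₃/nn) :=
          mul_le_mul hWb hR (abs_nonneg _) (by linarith)
        have m2 : |(α-1)*nn/α*Real.log (1 - c₁/nn) + (α-1)*c₁/α| * (1/(α-1))
            ≤ (K₂/nn)*(1/(α-1)) :=
          mul_le_mul_of_nonneg_right hW (le_of_lt (div_pos one_pos hα1))
        calc _ ≤ ((α-1)*c₁/α + K₂)*(K₃/nn) + (K₂/nn)*(1/(α-1)) := add_le_add m1 m2
          _ = (((α-1)*c₁/α + K₂)*K₃ + K₂/(α-1))/nn := by field_simp
      -- bound term 6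
      have hb6 : |Real.log (1-c₂/nn) - Real.log (1-c₁/nn)| ≤ (2*(c₁+c₂))/nn := by
        calc |Real.log (1-c₂/nn) - Real.log (1-c₁/nn)|
            ≤ |Real.log (1-c₂/nn)| + |Real.log (1-c₁/nn)| := abs_sub _ _
          _ ≤ 2*(c₂/nn) + 2*(c₁/nn) :=
            add_le_add (abs_log_one_sub_le hu2' hu2) (abs_log_one_sub_le hu1' hu1)
          _ = (2*(c₁+c₂))/nn := by field_simp; ring
      -- the vanishing constant
      have hZ : -Real.log (α-1) + 2*c₁/α + Real.log β - c₁/α = 0 := by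
        rw [hβeq, Real.log_div hα1ne hαne]; linear_combination hc₁α
      -- assemble
      have key : ∀ e : ℝ, e =
          1/2 * (α/nn - α/((α-1)*nn))
          + (-(2*(nn/α)*Real.log (1 - c₁/nn) + 2*c₁/α))
          + (Real.log (1-P) - Real.log β)
          + ((α-1)*nn/α * P * Real.log (1 - c₁/nn) / (1-P) + c₁/α)
          + (-(Real.log (1-c₂/nn) - Real.log (1-c₁/nn)))
          + (-Real.log (α-1) + 2*c₁/α + Real.log β - c₁/α) →
          |e| ≤ ((α + α/(α-1))/2 + 4*c₁^2/α + 2*K₁/β +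
            (((α-1)*c₁/α + K₂)*K₃ + K₂/(α-1)) + 2*(c₁+c₂)) / nn := by
        intro e he
        rw [he]
        have h2' : |(-(2*(nn/α)*Real.log (1 - c₁/nn) + 2*c₁/α))| ≤ (4*c₁^2/α)/nn := by
          rw [abs_neg]; exact hb3
        have h5' : |(-(Real.log (1-c₂/nn) - Real.log (1-c₁/nn)))| ≤ (2*(c₁+c₂))/nn := by
          rw [abs_neg]; exact hb6
        refine le_trans (assemble hb1 h2' hb4 hb5 h5' hZ) (le_of_eq ?_)
        ring
      exact key _ (by ring)
    obtain ⟨N, hN⟩ := Filter.eventually_atTop.mp hev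
    exact ⟨N, hN⟩
  · rw [hc₁α, sub_self]
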